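/- For every rational solution (d₁₂,d₁₃,d₁₄,d₂₃,d₂₄,d₃₄,y) of y² = CM(x₁₂,...,x₃₄) with the leading coefficient of s ↦ CM(d₁₂,d₁₃,d₁₄+s,d₂₃,d₂₄+s,d₃₄+s) nonzero, the binary quadratic equation y'² = CM(d₁₂,d₁₃,d₁₄+s,d₂₃,d₂₄+s,d₃₄+s) in (s, y') defines a conic with a rational point (0, y); if this conic is smooth it has infinitely many rational points, yielding infinitely many rational solutions of y² = CM. -/

import Mathlib

/-!
Ankum's observation makes `s ↦ CM(d₁₂, d₁₃, d₁₄ + s, d₂₃, d₂₄ + s, d₃₄ + s)` a quadratic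
`α s² + β s + y²`, so the solutions form a conic through `(0, y)`. The line of slope `t` through
that point meets the conic a second time at `s = (β - 2 t y) / (t² - α)`; away from the finitely
many `t` with `t² = α` or `β = 2 t y` this second point is distinct from `(0, y)`, and different
slopes give different points.
-/

/-- Half the 5×5 Cayley–Menger determinant, over ℚ. -/
noncomputable def CM (x12 x13 x14 x23 x24 x34 : ℚ) : ℚ :=
  Matrix.det !![(0 : ℚ), 1, 1, 1, 1;
                1, 0, x12^2, x13^2, x14^2;
                1, x12^2, 0, x23^2, x24^2;
                1, x13^2, x23^2, 0, x34^2;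
                1, x14^2, x24^2, x34^2, 0] / 2

open Polynomial

namespace Conic

variable {K : Type*} [Field K] (α β y : K)

/-- The second intersection of the conic `y'² = α s² + β s + y²` with the line of slope `t`
through its point `(0, y)`. -/
def secondPoint (t : K) : K × K :=
  ((β - 2 * t * y) / (t ^ 2 - α), y + t * ((β - 2 * t * y) / (t ^ 2 - α)))

/-- The slopes whose line meets the conic in a second, affine point different from `(0, y)`. -/
def goodSlopes : Set K :=
  {t | t ^ 2 ≠ α ∧ β - 2 * t * y ≠ 0}

variable {α β y}

theorem secondPoint_mem {t : K} (ht : t ^ 2 ≠ α) :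
    (secondPoint α β y t).2 ^ 2
      = α * (secondPoint α β y t).1 ^ 2 + β * (secondPoint α β y t).1 + y ^ 2 := by
  have hden : t ^ 2 - α ≠ 0 := sub_ne_zero.mpr ht
  simp only [secondPoint]
  field_simp
  ring

theorem secondPoint_injOn : Set.InjOn (secondPoint α β y) (goodSlopes α β y) := by
  rintro t₁ ⟨hα₁, hβ₁⟩ t₂ - heq
  obtain ⟨hs, hy'⟩ := Prod.ext_iff.mp heq
  simp only [secondPoint] at hs hy'
  have hs₁ : (β - 2 * t₁ * y) / (t₁ ^ 2 - α) ≠ 0 := div_ne_zero hβ₁ (sub_ne_zero.mpr hα₁)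
  rw [hs] at hy' hs₁
  have : (t₁ - t₂) * ((β - 2 * t₂ * y) / (t₂ ^ 2 - α)) = 0 := by linear_combination hy'
  exact sub_eq_zero.mp ((mul_eq_zero.mp this).resolve_right hs₁)

theorem goodSlopes_infinite [Infinite K] (h : β ≠ 0 ∨ 2 * y ≠ 0) :
    (goodSlopes α β y).Infinite := by
  set p : K[X] := (X ^ 2 - C α) * (C β - C (2 * y) * X)
  have hline : C β - C (2 * y) * X ≠ 0 := by
    intro h0
    have h₀ := congrArg (coeff · 0) h0
    have h₁ := congrArg (coeff · 1) h0
    simp only [coeff_sub, coeff_C_mul_X, coeff_zero, coeff_C] at h₀ h₁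
    norm_num at h₀ h₁
    exact h.elim (· h₀) (· (by simpa using h₁))
  have hp : p ≠ 0 := mul_ne_zero (X_pow_sub_C_ne_zero two_pos α) hline
  refine (finite_setOfPred_isRoot hp).infinite_compl.mono fun t ht => ?_
  simp only [Set.mem_compl_iff, Set.mem_ofPred_eq, IsRoot, p, eval_mul, eval_sub, eval_pow,
    eval_X, eval_C, mul_eq_zero, sub_eq_zero, not_or] at ht
  exact ⟨ht.1, fun h0 => ht.2 (by linear_combination h0)⟩

theorem infinite_setOf_sq_eq [Infinite K] (h : β ≠ 0 ∨ 2 * y ≠ 0) :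
    {p : K × K | p.2 ^ 2 = α * p.1 ^ 2 + β * p.1 + y ^ 2}.Infinite :=
  ((goodSlopes_infinite h).image secondPoint_injOn).mono <| by
    rintro _ ⟨t, ht, rfl⟩
    exact secondPoint_mem ht.1

end Conic

theorem infinitely_many_rational_solutions_general
    (d12 d13 d14 d23 d24 d34 y : ℚ)
    (hy : y^2 = CM d12 d13 d14 d23 d24 d34)
    (α β γ : ℚ)
    (hq : ∀ s : ℚ, CM d12 d13 (d14 + s) d23 (d24 + s) (d34 + s)
      = α * s^2 + β * s + γ)
    (hdisc : β^2 - 4 * α * γ ≠ 0) :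
    (0, y) ∈ {p : ℚ × ℚ |
        p.2^2 = CM d12 d13 (d14 + p.1) d23 (d24 + p.1) (d34 + p.1)} ∧
    {p : ℚ × ℚ |
        p.2^2 = CM d12 d13 (d14 + p.1) d23 (d24 + p.1) (d34 + p.1)}.Infinite := by
  have hγ : γ = y ^ 2 := by simpa [hy] using (hq 0).symm
  have hconic : {p : ℚ × ℚ | p.2^2 = CM d12 d13 (d14 + p.1) d23 (d24 + p.1) (d34 + p.1)}
      = {p : ℚ × ℚ | p.2 ^ 2 = α * p.1 ^ 2 + β * p.1 + y ^ 2} := by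
    simp only [hq, hγ]
  have hsmooth : β ≠ 0 ∨ 2 * y ≠ 0 := by
    by_contra! h
    exact hdisc (by rw [hγ, h.1, (mul_eq_zero.mp h.2).resolve_left two_ne_zero]; ring)
  rw [hconic]
  exact ⟨by simp, Conic.infinite_setOf_sq_eq hsmooth⟩

/-- From one rational solution of `y² = CM` one obtains infinitely many: the
conic `y'² = CM(d₁₂,d₁₃,d₁₄+s,d₂₃,d₂₄+s,d₃₄+s)` (a binary quadratic in `s` by
Ankum's observation) passes through the rational point `(0, y)`, and if it is
nondegenerate and smooth it has infinitely many rational points. -/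
theorem infinitely_many_rational_solutions
    (d12 d13 d14 d23 d24 d34 y : ℚ)
    (hy : y^2 = CM d12 d13 d14 d23 d24 d34)
    (α β γ : ℚ)
    (hq : ∀ s : ℚ, CM d12 d13 (d14 + s) d23 (d24 + s) (d34 + s)
      = α * s^2 + β * s + γ)
    (hα : α ≠ 0) (hdisc : β^2 - 4 * α * γ ≠ 0) :
    (0, y) ∈ {p : ℚ × ℚ |
        p.2^2 = CM d12 d13 (d14 + p.1) d23 (d24 + p.1) (d34 + p.1)} ∧
    {p : ℚ × ℚ |
        p.2^2 = CM d12 d13 (d14 + p.1) d23 (d24 + p.1) (d34 + p.1)}.Infinite :=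
  infinitely_many_rational_solutions_general d12 d13 d14 d23 d24 d34 y hy α β γ hq hdisc
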